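/- In the frequency-domain model of an LCMT, let j, k be nodes with par k = j (k is a child of j), and let i be a node with i ≠ j, i ≠ k, such that i is not a descendant of k. Then C(X i ω, X k ω) ≤ C(X j ω, X k ω) for every ω ∈ ℝ. If, in addition, h m ω ≠ 0 for every node m ≠ r and every ω, then the inequality is strict for every ω; consequently, if the relevant coherence functions are measurable, d(j, k) < d(i, k). -/

import Mathlib

/-!
Fix a frequency. For a child `k` of `j` we have `X k = h k • X j + ρ k`, and the innovation `ρ k`
is orthogonal to `X j` and to `X i` for every `i` that is not a descendant of `k`. For such a
decomposition coherence factorises along the edge: `C(X i, X k) = C(X i, X j) · C(X j, X k)`,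
and `C(X i, X j) ≤ 1` by Cauchy–Schwarz. Equality in Cauchy–Schwarz would make `X i` and `X j`
collinear, which is impossible because the innovation of whichever of `i`, `j` is not an
ancestor of the other is orthogonal to one signal but not to the other. Integrating the strict
pointwise inequality compares the distances.
-/

open scoped InnerProductSpace

open MeasureTheory

/-- The coherence of two vectors of a complex inner product space
(inner product conjugate-linear in the first argument):
`C(u, v) = ‖⟪u, v⟫‖² / (‖u‖² · ‖v‖²)`. -/
noncomputable def coherence {H : Type*} [NormedAddCommGroup H]
    [InnerProductSpace ℂ H] (u v : H) : ℝ :=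
  ‖⟪u, v⟫_ℂ‖ ^ 2 / (‖u‖ ^ 2 * ‖v‖ ^ 2)

/-- The coherence-based distance between two frequency-indexed families of
vectors: `d(f, g) = ( (1/(2π)) ∫_{-π}^{π} (1 − C(f ω, g ω)) dω )^{1/2}`. -/
noncomputable def cohDist {H : Type*} [NormedAddCommGroup H]
    [InnerProductSpace ℂ H] (f g : ℝ → H) : ℝ :=
  Real.sqrt ((1 / (2 * Real.pi)) *
    ∫ ω in (-Real.pi)..Real.pi, (1 - coherence (f ω) (g ω)))

section Coherence

variable {H : Type*} [NormedAddCommGroup H] [InnerProductSpace ℂ H]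

theorem coherence_nonneg (x y : H) : 0 ≤ coherence x y := by
  unfold coherence; positivity

theorem coherence_comm (x y : H) : coherence x y = coherence y x := by
  rw [coherence, coherence, norm_inner_symm, mul_comm]

theorem coherence_le_one (x y : H) : coherence x y ≤ 1 := by
  refine div_le_one_of_le₀ ?_ (by positivity)
  rw [← mul_pow]
  exact pow_le_pow_left₀ (norm_nonneg _) (norm_inner_le_norm x y) 2

theorem coherence_pos_of_inner_ne_zero {x y : H} (hxy : ⟪x, y⟫_ℂ ≠ 0) : 0 < coherence x y := by
  have hx : x ≠ 0 := by rintro rfl; exact hxy (inner_zero_left y)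
  have hy : y ≠ 0 := by rintro rfl; exact hxy (inner_zero_right x)
  unfold coherence
  have := norm_pos_iff.mpr hxy
  positivity

/-- A vector orthogonal to `x` but not to `y` witnesses that `x` and `y` are not collinear. -/
theorem coherence_lt_one_of_inner_eq_zero {x y e : H} (hx : x ≠ 0) (hex : ⟪e, x⟫_ℂ = 0)
    (hey : ⟪e, y⟫_ℂ ≠ 0) : coherence x y < 1 := by
  have hy : y ≠ 0 := by rintro rfl; exact hey (inner_zero_right e)
  have hlt : ‖⟪x, y⟫_ℂ‖ < ‖x‖ * ‖y‖ := by
    refine (norm_inner_le_norm x y).lt_of_ne fun heq => ?_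
    obtain ⟨c, -, rfl⟩ := (norm_inner_eq_norm_iff hx hy).mp heq
    exact hey (by rw [inner_smul_right, hex, mul_zero])
  rw [coherence, div_lt_one (by positivity), ← mul_pow]
  exact pow_lt_pow_left₀ hlt (norm_nonneg _) two_ne_zero

theorem coherence_smul_add_eq_mul {x y e : H} (c : ℂ) (hxe : ⟪x, e⟫_ℂ = 0)
    (hye : ⟪y, e⟫_ℂ = 0) :
    coherence x (c • y + e) = coherence x y * coherence y (c • y + e) := by
  by_cases hy : y = 0
  · simp [hy, coherence, hxe]
  simp only [coherence, inner_add_right, inner_smul_right, hxe, hye, add_zero,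
    inner_self_eq_norm_sq_to_K, norm_mul, norm_pow, RCLike.norm_ofReal, abs_norm]
  field_simp

theorem coherence_smul_add_le {x y e : H} (c : ℂ) (hxe : ⟪x, e⟫_ℂ = 0) (hye : ⟪y, e⟫_ℂ = 0) :
    coherence x (c • y + e) ≤ coherence y (c • y + e) := by
  rw [coherence_smul_add_eq_mul c hxe hye]
  exact mul_le_of_le_one_left (coherence_nonneg _ _) (coherence_le_one x y)

theorem coherence_smul_add_lt {x y e : H} {c : ℂ} (hc : c ≠ 0) (hy : y ≠ 0)
    (hxe : ⟪x, e⟫_ℂ = 0) (hye : ⟪y, e⟫_ℂ = 0) (hxy : coherence x y < 1) :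
    coherence x (c • y + e) < coherence y (c • y + e) := by
  rw [coherence_smul_add_eq_mul c hxe hye]
  refine mul_lt_of_lt_one_left (coherence_pos_of_inner_ne_zero ?_) hxy
  rw [inner_add_right, inner_smul_right, hye, add_zero]
  exact mul_ne_zero hc (inner_self_ne_zero.mpr hy)

theorem intervalIntegrable_one_sub_coherence {f g : ℝ → H}
    (hm : Measurable fun ω => coherence (f ω) (g ω)) (a b : ℝ) :
    IntervalIntegrable (fun ω => 1 - coherence (f ω) (g ω)) volume a b := by
  refine (intervalIntegrable_const (c := (1 : ℝ))).mono_fun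
    (measurable_const.sub hm).aestronglyMeasurable (ae_of_all _ fun ω => ?_)
  simp only [Real.norm_eq_abs, abs_one, abs_le]
  constructor <;> linarith [coherence_nonneg (f ω) (g ω), coherence_le_one (f ω) (g ω)]

theorem cohDist_lt_cohDist {f f' g : ℝ → H} (hm : Measurable fun ω => coherence (f ω) (g ω))
    (hm' : Measurable fun ω => coherence (f' ω) (g ω))
    (hlt : ∀ ω, coherence (f' ω) (g ω) < coherence (f ω) (g ω)) :
    cohDist f g < cohDist f' g := by
  have hint := intervalIntegrable_one_sub_coherence hm (-Real.pi) Real.pi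
  have hint' := intervalIntegrable_one_sub_coherence hm' (-Real.pi) Real.pi
  have hpi := Real.pi_pos
  have hgap : 0 < ∫ ω in (-Real.pi)..Real.pi,
      ((1 - coherence (f' ω) (g ω)) - (1 - coherence (f ω) (g ω))) :=
    intervalIntegral.intervalIntegral_pos_of_pos (hint'.sub hint)
      (fun ω => by linarith [hlt ω]) (by linarith)
  rw [intervalIntegral.integral_sub hint' hint] at hgap
  refine Real.sqrt_lt_sqrt (mul_nonneg (by positivity) ?_)
    (mul_lt_mul_of_pos_left (by linarith) (by positivity))
  exact intervalIntegral.integral_nonneg (by linarith)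
    fun ω _ => sub_nonneg.mpr (coherence_le_one _ _)

end Coherence

section RootedTree

variable {V : Type*}

def IsDescendant (par : V → V) (i j : V) : Prop :=
  ∃ n, 1 ≤ n ∧ par^[n] i = j

theorem isDescendant_par (par : V → V) (m : V) : IsDescendant par m (par m) :=
  ⟨1, le_rfl, rfl⟩

theorem IsDescendant.trans {par : V → V} {a b c : V} (hab : IsDescendant par a b)
    (hbc : IsDescendant par b c) : IsDescendant par a c := by
  obtain ⟨l, hl, rfl⟩ := hab
  obtain ⟨l', hl', rfl⟩ := hbc
  exact ⟨l' + l, by omega, Function.iterate_add_apply par l' l a⟩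

structure IsRootedTree (r : V) (par : V → V) : Prop where
  par_root : par r = r
  exists_iterate_eq_root : ∀ j, ∃ n, par^[n] j = r

namespace IsRootedTree

variable {r : V} {par : V → V} (hT : IsRootedTree r par)
include hT

theorem eq_root_of_isDescendant_self {m : V} (hm : IsDescendant par m m) : m = r := by
  obtain ⟨l, hl, hcyc⟩ := hm
  obtain ⟨n, hn⟩ := hT.exists_iterate_eq_root m
  have hperiodic : par^[l * n] m = m := by
    rw [Function.iterate_mul]; exact Function.iterate_fixed hcyc n
  rw [← hperiodic, ← Nat.sub_add_cancel (Nat.le_mul_of_pos_left n hl),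
    Function.iterate_add_apply, hn, Function.iterate_fixed hT.par_root]

theorem par_ne_self {m : V} (hm : m ≠ r) : par m ≠ m :=
  fun h => hm (hT.eq_root_of_isDescendant_self ⟨1, le_rfl, h⟩)

theorem not_isDescendant_par {m : V} (hm : m ≠ r) : ¬ IsDescendant par (par m) m :=
  fun h => hm (hT.eq_root_of_isDescendant_self ((isDescendant_par par m).trans h))

theorem isDescendant_antisymm {a b : V} (hab : IsDescendant par a b) (hba : IsDescendant par b a) :
    a = b := by
  have ha : a = r := hT.eq_root_of_isDescendant_self (hab.trans hba)
  obtain ⟨l, -, rfl⟩ := hab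
  rw [ha, Function.iterate_fixed hT.par_root]

theorem isDescendant_root {m : V} (hm : m ≠ r) : IsDescendant par m r := by
  obtain ⟨n, hn⟩ := hT.exists_iterate_eq_root m
  refine ⟨n, Nat.one_le_iff_ne_zero.mpr ?_, hn⟩
  rintro rfl
  exact hm hn

end IsRootedTree

end RootedTree

/-- The LCMT at one fixed frequency: transfer coefficients `h`, innovations `ρ`, signals `X`. -/
structure IsLCMT {H : Type*} [NormedAddCommGroup H] [InnerProductSpace ℂ H] {V : Type*}
    (r : V) (par : V → V) (h : V → ℂ) (ρ : V → H) (X : V → H) : Prop where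
  inner_noise : Pairwise fun a b => ⟪ρ a, ρ b⟫_ℂ = 0
  signal_root : X r = ρ r
  signal_eq : ∀ j, j ≠ r → X j = h j • X (par j) + ρ j

namespace IsLCMT

variable {H : Type*} [NormedAddCommGroup H] [InnerProductSpace ℂ H] {V : Type*}
  {r : V} {par : V → V} {h : V → ℂ} {ρ : V → H} {X : V → H}
  (hT : IsRootedTree r par) (hL : IsLCMT r par h ρ X)
include hT hL

/-- `X m` is a combination of the innovations of `m` and its ancestors only. -/
theorem inner_noise_signal_eq_zero {a m : V} (ham : a ≠ m) (hdesc : ¬ IsDescendant par m a) :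
    ⟪ρ a, X m⟫_ℂ = 0 := by
  obtain ⟨n, hn⟩ := hT.exists_iterate_eq_root m
  induction n generalizing m with
  | zero =>
    rw [Function.iterate_zero_apply] at hn
    rw [hn, hL.signal_root]
    exact hL.inner_noise (hn ▸ ham)
  | succ n ih =>
    by_cases hmr : m = r
    · rw [hmr, hL.signal_root]
      exact hL.inner_noise (hmr ▸ ham)
    have hpar : ⟪ρ a, X (par m)⟫_ℂ = 0 := by
      refine ih (fun h => hdesc (h ▸ isDescendant_par par m))
        (fun h => hdesc ((isDescendant_par par m).trans h)) ?_
      rwa [← Function.iterate_succ_apply]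
    rw [hL.signal_eq m hmr, inner_add_right, inner_smul_right, hpar, hL.inner_noise ham,
      mul_zero, add_zero]

theorem inner_noise_signal_par {m : V} (hm : m ≠ r) : ⟪ρ m, X (par m)⟫_ℂ = 0 :=
  hL.inner_noise_signal_eq_zero hT (hT.par_ne_self hm).symm (hT.not_isDescendant_par hm)

theorem inner_noise_signal_self (m : V) : ⟪ρ m, X m⟫_ℂ = ⟪ρ m, ρ m⟫_ℂ := by
  by_cases hmr : m = r
  · rw [hmr, hL.signal_root]
  rw [hL.signal_eq m hmr, inner_add_right, inner_smul_right,
    hL.inner_noise_signal_par hT hmr, mul_zero, zero_add]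

theorem signal_ne_zero {m : V} (hm : ρ m ≠ 0) : X m ≠ 0 := by
  intro hX
  have := hL.inner_noise_signal_self hT m
  rw [hX, inner_zero_right] at this
  exact hm (inner_self_eq_zero.mp this.symm)

theorem coherence_lt_one (hρ : ∀ m, ρ m ≠ 0) {i j : V} (hij : i ≠ j) :
    coherence (X i) (X j) < 1 := by
  have hself : ∀ m, ⟪ρ m, X m⟫_ℂ ≠ 0 := fun m => by
    rw [hL.inner_noise_signal_self hT]; exact inner_self_ne_zero.mpr (hρ m)
  by_cases hdesc : IsDescendant par i j
  · rw [coherence_comm]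
    refine coherence_lt_one_of_inner_eq_zero (hL.signal_ne_zero hT (hρ j))
      (hL.inner_noise_signal_eq_zero hT hij fun h => hij (hT.isDescendant_antisymm hdesc h))
      (hself i)
  · exact coherence_lt_one_of_inner_eq_zero (hL.signal_ne_zero hT (hρ i))
      (hL.inner_noise_signal_eq_zero hT hij.symm hdesc) (hself j)

theorem coherence_le_coherence_par {i k : V} (hk : k ≠ r) (hik : i ≠ k)
    (hi : ¬ IsDescendant par i k) : coherence (X i) (X k) ≤ coherence (X (par k)) (X k) := by
  rw [hL.signal_eq k hk]
  exact coherence_smul_add_le _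
    (inner_eq_zero_symm.mp (hL.inner_noise_signal_eq_zero hT hik.symm hi))
    (inner_eq_zero_symm.mp (hL.inner_noise_signal_par hT hk))

theorem coherence_lt_coherence_par (hρ : ∀ m, ρ m ≠ 0) {i k : V} (hk : k ≠ r) (hik : i ≠ k)
    (hi : ¬ IsDescendant par i k) (hip : i ≠ par k) (hh : h k ≠ 0) :
    coherence (X i) (X k) < coherence (X (par k)) (X k) := by
  rw [hL.signal_eq k hk]
  exact coherence_smul_add_lt hh (hL.signal_ne_zero hT (hρ _))
    (inner_eq_zero_symm.mp (hL.inner_noise_signal_eq_zero hT hik.symm hi))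
    (inner_eq_zero_symm.mp (hL.inner_noise_signal_par hT hk))
    (hL.coherence_lt_one hT hρ hip)

end IsLCMT

theorem lcmt_nephews_lemma_general
    {H : Type*} [NormedAddCommGroup H] [InnerProductSpace ℂ H]
    {V : Type*}
    (r : V) (par : V → V)
    (hroot : par r = r)
    (hreach : ∀ j, ∃ n, par^[n] j = r)
    (h : V → ℝ → ℂ) (ρ : V → ℝ → H)
    (horth : ∀ (ω : ℝ) (a b : V), a ≠ b → ⟪ρ a ω, ρ b ω⟫_ℂ = 0)
    (hwp : ∀ (j : V) (ω : ℝ), ρ j ω ≠ 0)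
    (X : V → ℝ → H)
    (hXr : ∀ ω, X r ω = ρ r ω)
    (hX : ∀ j, j ≠ r → ∀ ω, X j ω = h j ω • X (par j) ω + ρ j ω)
    (i j k : V)
    (hjk : par k = j)
    (hik : i ≠ k) (hijne : i ≠ j)
    (hnotdesc : ¬ ∃ n, 1 ≤ n ∧ par^[n] i = k) :
    (∀ ω : ℝ, coherence (X i ω) (X k ω) ≤ coherence (X j ω) (X k ω)) ∧
    ((∀ (m : V) (ω : ℝ), m ≠ r → h m ω ≠ 0) →
      (∀ ω : ℝ, coherence (X i ω) (X k ω) < coherence (X j ω) (X k ω)) ∧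
      ((Measurable fun ω => coherence (X j ω) (X k ω)) →
       (Measurable fun ω => coherence (X i ω) (X k ω)) →
        cohDist (X j) (X k) < cohDist (X i) (X k))) := by
  have hT : IsRootedTree r par := ⟨hroot, hreach⟩
  have hL : ∀ ω, IsLCMT r par (h · ω) (ρ · ω) (X · ω) :=
    fun ω => ⟨fun a b hab => horth ω a b hab, hXr ω, fun m hm => hX m hm ω⟩
  have hkr : k ≠ r := by
    rintro rfl
    exact hnotdesc (hT.isDescendant_root hik)
  subst hjk
  have hlt : (∀ (m : V) (ω : ℝ), m ≠ r → h m ω ≠ 0) →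
      ∀ ω, coherence (X i ω) (X k ω) < coherence (X (par k) ω) (X k ω) :=
    fun hnd ω => (hL ω).coherence_lt_coherence_par hT (hwp · ω) hkr hik hnotdesc hijne
      (hnd k ω hkr)
  exact ⟨fun ω => (hL ω).coherence_le_coherence_par hT hkr hik hnotdesc,
    fun hnd => ⟨hlt hnd, fun hmj hmi => cohDist_lt_cohDist hmj hmi (hlt hnd)⟩⟩

/-- Lemma 3 of the paper, the 'nephews' lemma: if `k` is a child
of `j` and `i` is a node different from `j` and `k` which is not a descendant
of `k`, then the coherence of `X k` with its parent `X j` is at least that with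
`X i`; under the nondegeneracy assumption that no transfer function vanishes,
the inequality is strict at every frequency, and consequently (given
measurability of the coherence functions) `d(j, k) < d(i, k)`. -/
theorem lcmt_nephews_lemma
    {H : Type*} [NormedAddCommGroup H] [InnerProductSpace ℂ H]
    {V : Type*} [Fintype V]
    (r : V) (par : V → V)
    (hroot : par r = r)
    (hpar : ∀ j, j ≠ r → par j ≠ j)
    (hreach : ∀ j, ∃ n, par^[n] j = r)
    (h : V → ℝ → ℂ) (ρ : V → ℝ → H)
    (horth : ∀ (ω : ℝ) (a b : V), a ≠ b → ⟪ρ a ω, ρ b ω⟫_ℂ = 0)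
    (hwp : ∀ (j : V) (ω : ℝ), ρ j ω ≠ 0)
    (X : V → ℝ → H)
    (hXr : ∀ ω, X r ω = ρ r ω)
    (hX : ∀ j, j ≠ r → ∀ ω, X j ω = h j ω • X (par j) ω + ρ j ω)
    (i j k : V)
    (hjk : par k = j)
    (hik : i ≠ k) (hijne : i ≠ j)
    (hnotdesc : ¬ ∃ n, 1 ≤ n ∧ par^[n] i = k) :
    (∀ ω : ℝ, coherence (X i ω) (X k ω) ≤ coherence (X j ω) (X k ω)) ∧
    ((∀ (m : V) (ω : ℝ), m ≠ r → h m ω ≠ 0) →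
      (∀ ω : ℝ, coherence (X i ω) (X k ω) < coherence (X j ω) (X k ω)) ∧
      ((Measurable fun ω => coherence (X j ω) (X k ω)) →
       (Measurable fun ω => coherence (X i ω) (X k ω)) →
        cohDist (X j) (X k) < cohDist (X i) (X k))) :=
  lcmt_nephews_lemma_general r par hroot hreach h ρ horth hwp X hXr hX i j k hjk hik hijne hnotdesc
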